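/- Let m be a positive natural number and s : Fin m → ℝ with s i > 0 for all i. Define the Gini coefficient of a positive weight function w : Fin m → ℝ as G(w) = (∑_{i} ∑_{j} |w i − w j|) / (2 · m · ∑_{i} w i). Then G(fun i => Real.sqrt (s i)) ≤ G(s); that is, the Gini coefficient of the square-root stake weights is at most the Gini coefficient of the linear stake weights. -/

import Mathlib

open Finset

/-- The Gini coefficient of a weight function `w` on `m` validators, via the
mean-absolute-difference formula. -/
noncomputable def gini (m : ℕ) (w : Fin m → ℝ) : ℝ :=
  (∑ i, ∑ j, |w i - w j|) / (2 * m * ∑ i, w i)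

/-!
Put `u = √s`, so that `|s i - s j| = |u i - u j| (u i + u j)`. After clearing denominators the
claim becomes `∑ i j k, |u i - u j| u k (u k - u i - u j) ≤ 0`. A triple sum is unchanged by a
cyclic rotation of its indices, so it suffices that each cyclic sum of the summand is
nonpositive: it equals `-2ac(c - a)`, where `a` and `c` are the least and the greatest of the
three values.
-/

lemma abs_sub_mul_cyclic_nonpos {a b c : ℝ} (ha : 0 ≤ a) (hb : 0 ≤ b) (hc : 0 ≤ c) :
    |a - b| * (c * (c - a - b)) + |b - c| * (a * (a - b - c)) + |c - a| * (b * (b - c - a))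
      ≤ 0 := by
  rcases abs_cases (a - b) with ⟨e1, f1⟩ | ⟨e1, f1⟩ <;>
  rcases abs_cases (b - c) with ⟨e2, f2⟩ | ⟨e2, f2⟩ <;>
  rcases abs_cases (c - a) with ⟨e3, f3⟩ | ⟨e3, f3⟩ <;>
  rw [e1, e2, e3] <;>
  nlinarith [mul_nonneg ha hb, mul_nonneg hb hc, mul_nonneg ha hc,
    mul_nonneg (mul_nonneg ha hb) hc]

section CyclicSum

variable {ι M : Type*} [Fintype ι]

lemma sum_sum_sum_rotate [AddCommMonoid M] (F : ι → ι → ι → M) :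
    ∑ i, ∑ j, ∑ k, F j k i = ∑ i, ∑ j, ∑ k, F i j k := by
  rw [sum_comm]
  exact sum_congr rfl fun _ _ => sum_comm

lemma sum_sum_sum_nonpos_of_cyclic [AddCommGroup M] [LinearOrder M] [IsOrderedAddMonoid M]
    (F : ι → ι → ι → M) (hF : ∀ i j k, F i j k + F j k i + F k i j ≤ 0) :
    ∑ i, ∑ j, ∑ k, F i j k ≤ 0 := by
  have h₁ := sum_sum_sum_rotate F
  have h₂ := sum_sum_sum_rotate fun i j k => F j k i
  have hsum : ∑ i, ∑ j, ∑ k, (F i j k + F j k i + F k i j) ≤ 0 :=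
    sum_nonpos fun i _ => sum_nonpos fun j _ => sum_nonpos fun k _ => hF i j k
  simp only [sum_add_distrib] at hsum
  rw [h₂, h₁] at hsum
  have h₃ : (3 : ℕ) • ∑ i, ∑ j, ∑ k, F i j k ≤ (3 : ℕ) • 0 := by
    rw [succ_nsmul, succ_nsmul, one_nsmul, smul_zero]
    exact hsum
  exact le_of_nsmul_le_nsmul_right three_ne_zero h₃

end CyclicSum

lemma sum_sum_abs_sub_mul_sum_sq_le {ι : Type*} [Fintype ι] (u : ι → ℝ) (hu : ∀ i, 0 ≤ u i) :
    (∑ i, ∑ j, |u i - u j|) * ∑ k, u k ^ 2 ≤ (∑ i, ∑ j, |u i ^ 2 - u j ^ 2|) * ∑ k, u k := by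
  have habs : ∀ i j, |u i ^ 2 - u j ^ 2| = |u i - u j| * (u i + u j) := fun i j => by
    rw [sq_sub_sq, mul_comm, abs_mul, abs_of_nonneg (add_nonneg (hu i) (hu j))]
  have hcyc := sum_sum_sum_nonpos_of_cyclic (fun i j k => |u i - u j| * (u k * (u k - u i - u j)))
    fun i j k => abs_sub_mul_cyclic_nonpos (hu i) (hu j) (hu k)
  rw [← sub_nonpos]
  simp_rw [habs, sum_mul, ← sum_sub_distrib, mul_sum, ← sum_sub_distrib]
  refine le_of_eq_of_le ?_ hcyc
  exact sum_congr rfl fun i _ => sum_congr rfl fun j _ => sum_congr rfl fun k _ => by ring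

lemma gini_le_gini_sq {m : ℕ} (hm : 0 < m) (u : Fin m → ℝ) (hu : ∀ i, 0 < u i) :
    gini m u ≤ gini m fun i => u i ^ 2 := by
  have : Nonempty (Fin m) := Fin.pos_iff_nonempty.mp hm
  have hu_sum : 0 < ∑ i, u i := sum_pos (fun i _ => hu i) univ_nonempty
  have hsq_sum : 0 < ∑ i, u i ^ 2 := sum_pos (fun i _ => pow_pos (hu i) 2) univ_nonempty
  unfold gini
  rw [div_le_div_iff₀ (by positivity) (by positivity)]
  have key := sum_sum_abs_sub_mul_sum_sq_le u fun i => (hu i).le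
  calc (∑ i, ∑ j, |u i - u j|) * (2 * m * ∑ i, u i ^ 2)
      = 2 * m * ((∑ i, ∑ j, |u i - u j|) * ∑ i, u i ^ 2) := by ring
    _ ≤ 2 * m * ((∑ i, ∑ j, |u i ^ 2 - u j ^ 2|) * ∑ i, u i) := by gcongr
    _ = (∑ i, ∑ j, |u i ^ 2 - u j ^ 2|) * (2 * m * ∑ i, u i) := by ring

/-- Lemma 2: the Gini coefficient of the square-root stake weights is at most the
Gini coefficient of the linear stake weights. -/
theorem srsw_gini_le (m : ℕ) (hm : 0 < m) (s : Fin m → ℝ) (hs : ∀ i, 0 < s i) :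
    gini m (fun i => Real.sqrt (s i)) ≤ gini m s := by
  have hsqrt_sq : (fun i => Real.sqrt (s i) ^ 2) = s := funext fun i => Real.sq_sqrt (hs i).le
  simpa only [hsqrt_sq] using gini_le_gini_sq hm _ fun i => Real.sqrt_pos.mpr (hs i)
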